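/- Let n ≥ 1 and let P(x) = ∏_{i=1}^n x_i on (0,1)^n. Then the idempotency average value of P over [0,1]^n equals 2^{n−1} / binom(2n−1, n), i.e., ∫_{(0,1)^n} (∏_{i=1}^n x_i)/(min_i x_i) dx = 2^{n−1} / binom(2n−1, n). -/

import Mathlib

open MeasureTheory Real Set
open scoped Nat

/-!
Off a null set the coordinates of `x` are distinct, so the integrand splits according to the
index `j` at which `x` is minimal. On the piece where `t = x j` is the minimum, `(∏ i, x i) / x j`
is the product of the other `n - 1` coordinates, each ranging over `(t, 1)`, so by Fubini every
piece contributes `∫₀¹ ((1 - t²) / 2) ^ (n - 1) dt`. The substitution `t = cos θ` turns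
`∫₀¹ (1 - t²) ^ m dt` into half of Wallis' integral `∫₀^π sin θ ^ (2m + 1) dθ`, which equals
`2 · 4 ^ m (m!)² / (2m + 1)!`.
-/

lemma prod_range_two_mul_add_two_div_eq (m : ℕ) :
    ∏ i ∈ Finset.range m, (2 * (i : ℝ) + 2) / (2 * i + 3) =
      4 ^ m * (m ! : ℝ) ^ 2 / (2 * m + 1)! := by
  induction m with
  | zero => simp
  | succ k ih =>
    rw [Finset.prod_range_succ, ih, show 2 * (k + 1) + 1 = 2 * k + 1 + 1 + 1 by ring,
      Nat.factorial_succ (2 * k + 1 + 1), Nat.factorial_succ (2 * k + 1), Nat.factorial_succ k]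
    push_cast
    field_simp
    ring

lemma integral_one_sub_sq_pow (m : ℕ) :
    ∫ t in (0 : ℝ)..1, (1 - t ^ 2) ^ m = 4 ^ m * (m ! : ℝ) ^ 2 / (2 * m + 1)! := by
  have hcont : Continuous fun t : ℝ => (1 - t ^ 2) ^ m := by fun_prop
  have h_even :
      ∫ t in (-1 : ℝ)..1, (1 - t ^ 2) ^ m = 2 * ∫ t in (0 : ℝ)..1, (1 - t ^ 2) ^ m := by
    rw [← intervalIntegral.integral_add_adjacent_intervals (b := 0) (hcont.intervalIntegrable _ _)
      (hcont.intervalIntegrable _ _)]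
    have := intervalIntegral.integral_comp_neg (a := 0) (b := 1) fun t : ℝ => (1 - t ^ 2) ^ m
    simp only [neg_sq, neg_zero] at this
    rw [← this]
    ring
  have h_cos : ∫ x in (0 : ℝ)..π, sin x ^ (2 * m + 1) = ∫ t in (-1 : ℝ)..1, (1 - t ^ 2) ^ m := by
    have := intervalIntegral.integral_comp_mul_deriv (a := 0) (b := π)
      (g := fun t => (1 - t ^ 2) ^ m) (fun x _ => hasDerivAt_cos x) (by fun_prop) hcont
    rw [cos_zero, cos_pi, intervalIntegral.integral_symm (-1)] at this
    rw [← neg_neg (∫ t in (-1 : ℝ)..1, _), ← this, ← intervalIntegral.integral_neg]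
    refine intervalIntegral.integral_congr fun x _ => ?_
    rw [Function.comp_apply, ← sin_sq, pow_succ, pow_mul]
    ring
  rw [← prod_range_two_mul_add_two_div_eq]
  linarith [integral_sin_pow_odd (n := m)]

lemma volume_setOf_apply_eq_apply {ι : Type*} [Fintype ι] {i j : ι} (hij : i ≠ j) :
    volume {x : ι → ℝ | x i = x j} = 0 := by
  classical
  let s := LinearMap.ker ((LinearMap.proj i : (ι → ℝ) →ₗ[ℝ] ℝ) - LinearMap.proj j)
  have hs : s ≠ ⊤ := fun h => by
    have := h ▸ Submodule.mem_top (x := Pi.single i (1 : ℝ))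
    simp [s, hij.symm] at this
  convert Measure.addHaar_submodule volume s hs
  ext x
  simp [s, sub_eq_zero]

lemma ae_injective (ι : Type*) [Fintype ι] : ∀ᵐ x : ι → ℝ, Function.Injective x := by
  simp only [Function.Injective, ae_all_iff]
  intro i j
  by_cases hij : i = j
  · exact .of_forall fun _ _ => hij
  · filter_upwards [measure_eq_zero_iff_ae_notMem.mp (volume_setOf_apply_eq_apply hij)]
      with x hx h using absurd h hx

lemma inf'_eq_sum_indicator {ι α M : Type*} [Fintype ι] [LinearOrder α] [AddCommMonoid M]
    (h : (Finset.univ : Finset ι).Nonempty) (F : (ι → α) → α → M) {x : ι → α}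
    (hx : Function.Injective x) :
    F x (Finset.univ.inf' h x) =
      ∑ j, {y : ι → α | ∀ i ≠ j, y j < y i}.indicator (fun y => F y (y j)) x := by
  obtain ⟨j, -, hj⟩ := Finset.exists_mem_eq_inf' h x
  have hmin : ∀ i, x j ≤ x i := fun i => hj ▸ Finset.inf'_le x (Finset.mem_univ i)
  rw [Finset.sum_eq_single j, indicator_of_mem, hj]
  · exact fun i hi => (hmin i).lt_of_ne (hx.ne hi.symm)
  · exact fun k _ hkj => indicator_of_notMem (fun hk => (hk j hkj.symm).not_ge (hmin k)) _
  · exact fun h => absurd (Finset.mem_univ j) h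

lemma setIntegral_setOf_mem_and_mem {α β E : Type*} [MeasurableSpace α] [MeasurableSpace β]
    [NormedAddCommGroup E] [NormedSpace ℝ E] {μ : Measure α} {ν : Measure β} [SFinite μ]
    [SFinite ν] {s : Set α} {t : α → Set β} (hs : MeasurableSet s)
    (hst : MeasurableSet {p : α × β | p.1 ∈ s ∧ p.2 ∈ t p.1}) {f : α × β → E}
    (hf : IntegrableOn f {p | p.1 ∈ s ∧ p.2 ∈ t p.1} (μ.prod ν)) :
    ∫ p in {p | p.1 ∈ s ∧ p.2 ∈ t p.1}, f p ∂(μ.prod ν) =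
      ∫ a in s, ∫ b in t a, f (a, b) ∂ν ∂μ := by
  rw [← integral_indicator hst, integral_prod _ (hf.integrable_indicator hst),
    ← integral_indicator hs]
  congr 1 with a
  by_cases ha : a ∈ s
  · have ht : MeasurableSet (t a) := by simpa [ha] using measurable_prodMk_left (x := a) hst
    rw [indicator_of_mem ha, ← integral_indicator ht]
    congr 1 with b
    by_cases hb : b ∈ t a <;> simp [hb, ha]
  · simp [indicator, ha]

lemma setIntegral_pi_prod_eq_pow {ι E : Type*} [Fintype ι] [MeasureSpace E]
    [SigmaFinite (volume : Measure E)] (s : Set E) (f : E → ℝ) :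
    ∫ y in univ.pi fun _ : ι => s, ∏ i, f (y i) = (∫ t in s, f t) ^ Fintype.card ι := by
  rw [volume_pi, Measure.restrict_pi_pi, integral_fintype_prod_eq_pow]

lemma integral_Ioo_id {a b : ℝ} (hab : a ≤ b) : ∫ t in Ioo a b, t = (b ^ 2 - a ^ 2) / 2 := by
  rw [← integral_Ioc_eq_integral_Ioo, ← intervalIntegral.integral_of_le hab, integral_id]

lemma prod_div_apply_eq_prod_erase {ι K : Type*} [Fintype ι] [DecidableEq ι] [Field K]
    {x : ι → K} {j : ι}
    (hj : x j ≠ 0) : (∏ i, x i) / x j = ∏ i ∈ Finset.univ.erase j, x i := by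
  rw [← Finset.mul_prod_erase _ _ (Finset.mem_univ j), mul_div_cancel_left₀ _ hj]

lemma integrableOn_prod_div_apply {ι : Type*} [Fintype ι] (j : ι) :
    IntegrableOn (fun x : ι → ℝ => (∏ i, x i) / x j) (univ.pi fun _ => Ioo 0 1) := by
  classical
  refine Measure.integrableOn_of_bounded (M := 1) ?_
    (Measurable.aestronglyMeasurable (by fun_prop)) ?_
  · simp [volume_pi, Measure.pi_pi]
  · filter_upwards [ae_restrict_mem (MeasurableSet.univ_pi fun _ => measurableSet_Ioo)] with x hx
    simp only [mem_univ_pi, mem_Ioo] at hx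
    rw [prod_div_apply_eq_prod_erase (hx j).1.ne', Real.norm_eq_abs,
      abs_of_nonneg (Finset.prod_nonneg fun i _ => (hx i).1.le)]
    exact Finset.prod_le_one (fun i _ => (hx i).1.le) fun i _ => (hx i).2.le

lemma measurableSet_setOf_forall_ne_lt {ι : Type*} [Countable ι] (j : ι) :
    MeasurableSet {x : ι → ℝ | ∀ i ≠ j, x j < x i} := by
  simp only [ofPred_forall]
  exact .iInter fun i => .iInter fun _ => measurableSet_lt (by fun_prop) (by fun_prop)

lemma piFinSuccAbove_symm_preimage_cube_inter_setOf_lt {m : ℕ} (j : Fin (m + 1)) :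
    (MeasurableEquiv.piFinSuccAbove (fun _ => ℝ) j).symm ⁻¹'
        ((univ.pi fun _ => Ioo 0 1) ∩ {x | ∀ i ≠ j, x j < x i}) =
      {p | p.1 ∈ Ioo 0 1 ∧ p.2 ∈ univ.pi fun _ => Ioo p.1 1} := by
  ext ⟨t, y⟩
  simp only [mem_preimage, mem_inter_iff, mem_univ_pi, mem_ofPred_eq, Fin.forall_iff_succAbove j,
    MeasurableEquiv.piFinSuccAbove_symm_apply, Fin.insertNthEquiv_apply,
    Fin.insertNth_apply_same, Fin.insertNth_apply_succAbove, ne_eq, Fin.succAbove_ne,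
    not_false_eq_true, forall_const, not_true_eq_false, IsEmpty.forall_iff, true_and, mem_Ioo]
  constructor
  · rintro ⟨⟨ht, hy⟩, hty⟩
    exact ⟨ht, fun i => ⟨hty i, (hy i).2⟩⟩
  · rintro ⟨ht, hy⟩
    exact ⟨⟨ht, fun i => ⟨ht.1.trans (hy i).1, (hy i).2⟩⟩, fun i => (hy i).1⟩

lemma setIntegral_cube_inter_setOf_lt_prod_div {m : ℕ} (j : Fin (m + 1)) :
    ∫ x in (univ.pi fun _ => Ioo 0 1) ∩ {x | ∀ i ≠ j, x j < x i}, (∏ i, x i) / x j =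
      ∫ t in Ioo (0 : ℝ) 1, ((1 - t ^ 2) / 2) ^ m := by
  have hmp := (volume_preserving_piFinSuccAbove (fun _ : Fin (m + 1) => ℝ) j).symm
  have he := (MeasurableEquiv.piFinSuccAbove (fun _ : Fin (m + 1) => ℝ) j).symm.measurableEmbedding
  have hU := he.measurable
    ((MeasurableSet.univ_pi fun _ => measurableSet_Ioo (a := (0 : ℝ)) (b := 1)).inter
      (measurableSet_setOf_forall_ne_lt j))
  have h_int := (hmp.integrableOn_comp_preimage he).2
    ((integrableOn_prod_div_apply j).mono_set (inter_subset_left (t := {x | ∀ i ≠ j, x j < x i})))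
  rw [← hmp.setIntegral_preimage_emb he, piFinSuccAbove_symm_preimage_cube_inter_setOf_lt]
  rw [piFinSuccAbove_symm_preimage_cube_inter_setOf_lt] at hU h_int
  have h_eq : EqOn (fun p => (∏ i, (MeasurableEquiv.piFinSuccAbove (fun _ => ℝ) j).symm p i) /
      (MeasurableEquiv.piFinSuccAbove (fun _ => ℝ) j).symm p j) (fun p => ∏ i, p.2 i)
      {p : ℝ × (Fin m → ℝ) | p.1 ∈ Ioo 0 1 ∧ p.2 ∈ univ.pi fun _ => Ioo p.1 1} := fun p hp => by
    simp only [MeasurableEquiv.piFinSuccAbove_symm_apply, Fin.insertNthEquiv_apply,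
      Fin.prod_insertNth, Fin.insertNth_apply_same, mul_div_cancel_left₀ _ hp.1.1.ne']
  have h_int' := h_int.congr_fun h_eq hU
  rw [Measure.volume_eq_prod] at h_int'
  rw [setIntegral_congr_fun hU h_eq, Measure.volume_eq_prod,
    setIntegral_setOf_mem_and_mem (t := fun a => univ.pi fun _ => Ioo a 1) measurableSet_Ioo hU
      h_int']
  refine setIntegral_congr_fun measurableSet_Ioo fun t ht => ?_
  refine (setIntegral_pi_prod_eq_pow (ι := Fin m) (Ioo t 1) fun s => s).trans ?_
  rw [Fintype.card_fin, integral_Ioo_id ht.2.le]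
  ring

lemma add_one_mul_integral_Ioo_half_one_sub_sq_pow (m : ℕ) :
    ((m : ℝ) + 1) * ∫ t in Ioo (0 : ℝ) 1, ((1 - t ^ 2) / 2) ^ m =
      2 ^ m / ((2 * m + 1).choose (m + 1) : ℝ) := by
  simp_rw [div_pow]
  rw [integral_div, ← integral_Ioc_eq_integral_Ioo, ← intervalIntegral.integral_of_le zero_le_one,
    integral_one_sub_sq_pow, show (4 : ℝ) = 2 ^ 2 by norm_num, ← pow_mul,
    Nat.cast_choose ℝ (by omega : m + 1 ≤ 2 * m + 1), show 2 * m + 1 - (m + 1) = m by omega,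
    Nat.factorial_succ m]
  push_cast
  field_simp
  ring

/-- For `n ≥ 1`, the idempotency average value over `[0,1]^n` of the product
`P(x) = ∏ᵢ xᵢ` equals `2^{n−1}/binom(2n−1, n)`, i.e.
`∫_{(0,1)^n} (∏ᵢ xᵢ)/(minᵢ xᵢ) dx = 2^{n−1}/binom(2n−1, n)`. -/
theorem idempotency_average_product (n : ℕ) (hn : 1 ≤ n) :
    (∫ x in Set.univ.pi fun _ : Fin n => Set.Ioo (0 : ℝ) 1,
        (∏ i : Fin n, x i) / Finset.univ.inf' ⟨⟨0, by omega⟩, Finset.mem_univ _⟩ x)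
      = 2 ^ (n - 1) / (Nat.choose (2 * n - 1) n : ℝ) := by
  obtain ⟨m, rfl⟩ : ∃ m, n = m + 1 := ⟨n - 1, by omega⟩
  have h_split : ∀ᵐ x : Fin (m + 1) → ℝ,
      (∏ i, x i) / Finset.univ.inf' ⟨⟨0, by omega⟩, Finset.mem_univ _⟩ x =
        ∑ j, {y | ∀ i ≠ j, y j < y i}.indicator (fun y => (∏ i, y i) / y j) x := by
    filter_upwards [ae_injective (Fin (m + 1))] with x hx
    exact inf'_eq_sum_indicator _ (fun y t => (∏ i, y i) / t) hx
  rw [integral_congr_ae (ae_restrict_of_ae h_split), integral_finsetSum _ fun j _ =>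
    (integrableOn_prod_div_apply j).indicator (measurableSet_setOf_forall_ne_lt j)]
  simp_rw [setIntegral_indicator (measurableSet_setOf_forall_ne_lt _),
    setIntegral_cube_inter_setOf_lt_prod_div]
  rw [Finset.sum_const, Finset.card_univ, Fintype.card_fin, nsmul_eq_mul, Nat.add_sub_cancel,
    show 2 * (m + 1) - 1 = 2 * m + 1 by omega]
  exact_mod_cast add_one_mul_integral_Ioo_half_one_sub_sq_pow m
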